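/- Over F_q with q odd, let λ, μ, θ ∈ F_q with λ(λ−μ) a nonzero square, say r² = λ(λ−μ), r ≠ 0. If (x, y) lies on the curve y² = θ·x(x−1)(x−λ)(x−μ)(x−λ(1−μ)/(1−λ)) and x ≠ λ, then the pair (t, s) with t = x + λ(x−μ)/(x−λ) and s = y·(x − (λ − r))/((x−λ)²) satisfies s² = θ·(t−μ)·(t − (1−λμ)/(1−λ))·(t − 2(λ − r)). -/

import Mathlib

/-!
Write `t = x + λ(x - μ)/(x - λ) = (x² - λμ)/(x - λ)`. Each factor `t - ρ` of the target cubic is a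
quadratic in `x` over `x - λ`: `t - μ` and `t - (1 - λμ)/(1 - λ)` split off two pairs of the five
roots `0, μ` and `1, λ(1 - μ)/(1 - λ)` of the quintic, while `r² = λ(λ - μ)` makes
`t - 2(λ - r) = (x - (λ - r))²/(x - λ)` a square. So `θ` times the three factors is
`y²/(x - λ) · (x - (λ - r))²/(x - λ)³ = s²`.
-/

namespace QuotientMap

variable {K : Type*} [Field K] {lam mu x : K}

def xCoord (lam mu x : K) : K := x + lam * (x - mu) / (x - lam)

theorem xCoord_sub_mu (hx : x ≠ lam) :
    xCoord lam mu x - mu = x * (x - mu) / (x - lam) := by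
  have hxl : x - lam ≠ 0 := sub_ne_zero.mpr hx
  unfold xCoord
  field_simp
  ring

theorem xCoord_sub_div (hx : x ≠ lam) (hlam1 : lam ≠ 1) :
    xCoord lam mu x - (1 - lam * mu) / (1 - lam) =
      (x - 1) * (x - lam * (1 - mu) / (1 - lam)) / (x - lam) := by
  have hxl : x - lam ≠ 0 := sub_ne_zero.mpr hx
  have h1l : (1 : K) - lam ≠ 0 := sub_ne_zero.mpr hlam1.symm
  unfold xCoord
  field_simp
  ring

theorem xCoord_sub_two_mul {r : K} (hx : x ≠ lam) (hr : r ^ 2 = lam * (lam - mu)) :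
    xCoord lam mu x - 2 * (lam - r) = (x - (lam - r)) ^ 2 / (x - lam) := by
  have hxl : x - lam ≠ 0 := sub_ne_zero.mpr hx
  unfold xCoord
  field_simp
  linear_combination -hr

end QuotientMap

open QuotientMap in
theorem quotient_map_identity_general {K : Type*} [Field K]
    (lam mu theta r x y : K)
    (hlam1 : lam ≠ 1)
    (hr : r ^ 2 = lam * (lam - mu))
    (hcurve : y ^ 2 =
      theta * x * (x - 1) * (x - lam) * (x - mu) * (x - lam * (1 - mu) / (1 - lam)))
    (hx : x ≠ lam) :
    (y * (x - (lam - r)) / ((x - lam) ^ 2)) ^ 2 =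
      theta * ((x + lam * (x - mu) / (x - lam)) - mu) *
        ((x + lam * (x - mu) / (x - lam)) - (1 - lam * mu) / (1 - lam)) *
        ((x + lam * (x - mu) / (x - lam)) - 2 * (lam - r)) := by
  change _ = theta * (xCoord lam mu x - mu) * (xCoord lam mu x - (1 - lam * mu) / (1 - lam)) *
    (xCoord lam mu x - 2 * (lam - r))
  rw [xCoord_sub_mu hx, xCoord_sub_div hx hlam1, xCoord_sub_two_mul hx hr, div_pow, mul_pow,
    hcurve]
  have hxl : x - lam ≠ 0 := sub_ne_zero.mpr hx
  field_simp

theorem quotient_map_identity {K : Type*} [Field K] (h2 : (2 : K) ≠ 0)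
    (lam mu theta r x y : K)
    (hlam0 : lam ≠ 0) (hlam1 : lam ≠ 1)
    (hmu0 : mu ≠ 0) (hmu1 : mu ≠ 1) (hmulam : mu ≠ lam)
    (hth : theta ≠ 0) (hr0 : r ≠ 0) (hr : r ^ 2 = lam * (lam - mu))
    (hcurve : y ^ 2 =
      theta * x * (x - 1) * (x - lam) * (x - mu) * (x - lam * (1 - mu) / (1 - lam)))
    (hx : x ≠ lam) :
    (y * (x - (lam - r)) / ((x - lam) ^ 2)) ^ 2 =
      theta * ((x + lam * (x - mu) / (x - lam)) - mu) *
        ((x + lam * (x - mu) / (x - lam)) - (1 - lam * mu) / (1 - lam)) *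
        ((x + lam * (x - mu) / (x - lam)) - 2 * (lam - r)) :=
  quotient_map_identity_general lam mu theta r x y hlam1 hr hcurve hx
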